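/- arXiv:1708.08186 — 3 statements merged into one kernel-verified Lean document; each statement's English description precedes it below -/
import Mathlib

section
/- The family S = {ŝ_D : D ⊂ N^k finite} of committee-model functions is jump free: for all finite A, B ⊂ N^k and x ∈ A ∩ B, if A_x ⊆ B_x and ŝ_A(y) = ŝ_B(y) for all y ∈ A_x, then ŝ_A(x) ≥ ŝ_B(x). -/
open Finset
open scoped Classical

/-- The maximum coordinate of a tuple in `ℕ^k`. -/
def maxv {k : ℕ} (x : Fin k → ℕ) : ℕ := Finset.univ.sup x

/-- The minimum coordinate of a tuple in `ℕ^k`. -/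
noncomputable def minv {k : ℕ} (x : Fin k → ℕ) : ℕ := sInf (Set.range x)

/-- Order equivalence of tuples: `x ot y` iff the strict-order and equality
patterns of coordinates agree. -/
def OT {k : ℕ} (x y : Fin k → ℕ) : Prop :=
  ∀ i j : Fin k, (x i < x j ↔ y i < y j) ∧ (x i = x j ↔ y i = y j)

/-- A downward directed lattice graph: every edge strictly decreases the max norm. -/
def Downward {k : ℕ} (Θ : Set ((Fin k → ℕ) × (Fin k → ℕ))) : Prop :=
  ∀ e ∈ Θ, maxv e.2 < maxv e.1

/-- A partial selection function: whenever defined, its value is one of the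
reported values `n_i`. -/
def PartialSelection {k r : ℕ}
    (F : (Fin k → ℕ) → (Fin r → (Fin k → ℕ) × ℕ) → Option ℕ) : Prop :=
  ∀ x ys n, F x ys = some n → ∃ i, n = (ys i).2

/-- `Φ` is the family of sets `Φ^D_z` of defined values of `F` at `z`, where the
reported value of a subordinate `y_i ∈ G^z_D` is `f y_i` if `Φ y_i ≠ ∅` and
`min(y_i)` otherwise. -/
def PhiSpec {k r : ℕ} (Θ : Set ((Fin k → ℕ) × (Fin k → ℕ)))
    (F : (Fin k → ℕ) → (Fin r → (Fin k → ℕ) × ℕ) → Option ℕ)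
    (D : Set (Fin k → ℕ)) (f : (Fin k → ℕ) → ℕ)
    (Φ : (Fin k → ℕ) → Set ℕ) : Prop :=
  ∀ z, Φ z = {n | ∃ ys : Fin r → (Fin k → ℕ) × ℕ,
      (∀ i, (ys i).1 ∈ D ∧ (z, (ys i).1) ∈ Θ) ∧
      (∀ i, (ys i).2 = if Φ ((ys i).1) = ∅ then minv ((ys i).1) else f ((ys i).1)) ∧
      F z ys = some n}

/-- `f` (with associated sets `Φ`) is the committee-model function on `D` with
base value `base z` when `Φ z = ∅`, and `min (Φ z)` otherwise. -/
def CommitteeModel {k r : ℕ} (Θ : Set ((Fin k → ℕ) × (Fin k → ℕ)))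
    (F : (Fin k → ℕ) → (Fin r → (Fin k → ℕ) × ℕ) → Option ℕ)
    (D : Set (Fin k → ℕ)) (base : (Fin k → ℕ) → ℕ)
    (f : (Fin k → ℕ) → ℕ) (Φ : (Fin k → ℕ) → Set ℕ) : Prop :=
  PhiSpec Θ F D f Φ ∧
  ∀ z ∈ D, (Φ z = ∅ → f z = base z) ∧ (Φ z ≠ ∅ → f z = sInf (Φ z))

/-- `f` is regressively regular over `E`: on each order type class of `E^k`,
either `f` is constant with value `< min E`, or `f x ≥ min x` throughout. -/
def RegReg {k : ℕ} (f : (Fin k → ℕ) → ℕ) (E : Finset ℕ) : Prop :=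
  ∀ x : Fin k → ℕ, (∀ i, x i ∈ E) →
    ((∀ y : Fin k → ℕ, (∀ i, y i ∈ E) → OT x y → f y = f x) ∧ f x < sInf (E : Set ℕ)) ∨
    (∀ y : Fin k → ℕ, (∀ i, y i ∈ E) → OT x y → minv y ≤ f y)

/-- the family of committee-model functions is jump free. -/
theorem shat_jump_free (k r : ℕ) (hk : 2 ≤ k) (hr : 1 ≤ r)
    (Θ : Set ((Fin k → ℕ) × (Fin k → ℕ))) (hΘ : Downward Θ)
    (F : (Fin k → ℕ) → (Fin r → (Fin k → ℕ) × ℕ) → Option ℕ)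
    (hF : PartialSelection F)
    (A B : Set (Fin k → ℕ)) (hA : A.Finite) (hB : B.Finite)
    (sA sB : (Fin k → ℕ) → ℕ) (ΦA ΦB : (Fin k → ℕ) → Set ℕ)
    (hmA : CommitteeModel Θ F A maxv sA ΦA)
    (hmB : CommitteeModel Θ F B maxv sB ΦB)
    (x : Fin k → ℕ) (hx : x ∈ A ∩ B)
    (hsub : {z ∈ A | maxv z < maxv x} ⊆ {z ∈ B | maxv z < maxv x})
    (hagree : ∀ y ∈ {z ∈ A | maxv z < maxv x}, sA y = sB y) :
    sB x ≤ sA x := by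
  obtain ⟨hspecA, hmodA⟩ := hmA
  obtain ⟨hspecB, hmodB⟩ := hmB
  obtain ⟨hxA, hxB⟩ := hx
  have hminmax : ∀ w : Fin k → ℕ, minv w ≤ maxv w := by
    intro w
    have h0 : (0 : ℕ) < k := by omega
    calc minv w ≤ w ⟨0, h0⟩ := Nat.sInf_le ⟨⟨0, h0⟩, rfl⟩
      _ ≤ maxv w := Finset.le_sup (Finset.mem_univ _)
  -- generic: every element of Φ z is < maxv z
  have key : ∀ (D : Set (Fin k → ℕ)) (f : (Fin k → ℕ) → ℕ) (Φ : (Fin k → ℕ) → Set ℕ),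
      PhiSpec Θ F D f Φ →
      (∀ z ∈ D, (Φ z = ∅ → f z = maxv z) ∧ (Φ z ≠ ∅ → f z = sInf (Φ z))) →
      ∀ m z, maxv z < m → ∀ n ∈ Φ z, n < maxv z := by
    intro D f Φ hspec hmod m
    induction m with
    | zero => intro z hz; omega
    | succ m ih =>
      intro z hz n hn
      rw [hspec z] at hn
      obtain ⟨ys, h1, h2, hFz⟩ := hn
      obtain ⟨i, hi⟩ := hF z ys n hFz
      have hwD := (h1 i).1
      have hlt : maxv (ys i).1 < maxv z := hΘ _ (h1 i).2
      have h2i := h2 i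
      by_cases hPe : Φ ((ys i).1) = ∅
      · rw [hPe, if_pos rfl] at h2i
        have := hminmax ((ys i).1)
        omega
      · have hfw : f ((ys i).1) = sInf (Φ ((ys i).1)) := (hmod _ hwD).2 hPe
        have hne : (Φ ((ys i).1)).Nonempty := Set.nonempty_iff_ne_empty.mpr hPe
        have hmem : sInf (Φ ((ys i).1)) ∈ Φ ((ys i).1) := Nat.sInf_mem hne
        have hrec := ih ((ys i).1) (by omega) _ hmem
        rw [if_neg hPe] at h2i
        omega
  have keyA : ∀ z, ∀ n ∈ ΦA z, n < maxv z := fun z =>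
    key A sA ΦA hspecA hmodA (maxv z + 1) z (by omega)
  have keyB : ∀ z, ∀ n ∈ ΦB z, n < maxv z := fun z =>
    key B sB ΦB hspecB hmodB (maxv z + 1) z (by omega)
  have hBle : ∀ z ∈ B, sB z ≤ maxv z := by
    intro z hz
    by_cases hPe : ΦB z = ∅
    · rw [(hmodB z hz).1 hPe]
    · have := keyB z _ (Nat.sInf_mem (Set.nonempty_iff_ne_empty.mpr hPe))
      rw [(hmodB z hz).2 hPe]; omega
  -- main induction
  have main : ∀ m y, maxv y < m → y ∈ A → y ∈ B → maxv y ≤ maxv x →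
      ΦA y ⊆ ΦB y ∧ sB y ≤ sA y := by
    intro m
    induction m with
    | zero => intro y hy; omega
    | succ m ih =>
      intro y hym hyA hyB hyx
      have hsubPhi : ΦA y ⊆ ΦB y := by
        intro n hn
        rw [hspecA y] at hn
        rw [hspecB y]
        obtain ⟨ys, h1, h2, hFy⟩ := hn
        refine ⟨ys, ?_, ?_, hFy⟩
        · intro i
          have hlt : maxv (ys i).1 < maxv y := hΘ _ (h1 i).2
          have hzAx : (ys i).1 ∈ {z ∈ A | maxv z < maxv x} :=
            ⟨(h1 i).1, lt_of_lt_of_le hlt hyx⟩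
          exact ⟨(hsub hzAx).1, (h1 i).2⟩
        · intro i
          have hzA := (h1 i).1
          have hlt : maxv (ys i).1 < maxv y := hΘ _ (h1 i).2
          have hzAx : (ys i).1 ∈ {z ∈ A | maxv z < maxv x} :=
            ⟨hzA, lt_of_lt_of_le hlt hyx⟩
          have hwB : (ys i).1 ∈ B := (hsub hzAx).1
          have hag : sA ((ys i).1) = sB ((ys i).1) := hagree _ hzAx
          have ihw := ih ((ys i).1) (by omega) hzA hwB (le_of_lt (lt_of_lt_of_le hlt hyx))
          by_cases hPe : ΦA ((ys i).1) = ∅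
          · have hPB : ΦB ((ys i).1) = ∅ := by
              by_contra hPB
              have hsBlt : sB ((ys i).1) < maxv ((ys i).1) := by
                have := keyB ((ys i).1) _
                  (Nat.sInf_mem (Set.nonempty_iff_ne_empty.mpr hPB))
                rw [(hmodB _ hwB).2 hPB]; omega
              have hsA : sA ((ys i).1) = maxv ((ys i).1) := (hmodA _ hzA).1 hPe
              omega
            rw [h2 i, hPe, hPB]; simp
          · have hPB : ΦB ((ys i).1) ≠ ∅ := by
              intro h
              obtain ⟨a, ha⟩ := Set.nonempty_iff_ne_empty.mpr hPe
              have := ihw.1 ha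
              rw [h] at this
              exact this
            rw [h2 i, if_neg hPe, if_neg hPB, hag]
      refine ⟨hsubPhi, ?_⟩
      by_cases hPe : ΦA y = ∅
      · rw [(hmodA y hyA).1 hPe]; exact hBle y hyB
      · have hne : (ΦA y).Nonempty := Set.nonempty_iff_ne_empty.mpr hPe
        have hPB : ΦB y ≠ ∅ :=
          Set.nonempty_iff_ne_empty.mp ⟨sInf (ΦA y), hsubPhi (Nat.sInf_mem hne)⟩
        rw [(hmodA y hyA).2 hPe, (hmodB y hyB).2 hPB]
        exact Nat.sInf_le (hsubPhi (Nat.sInf_mem hne))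
  exact (main (maxv x + 1) x (by omega) hxA hxB le_rfl).2
end

section
/- Under the jump-free hypotheses, if Φ^A_x ≠ ∅ then Φ^A_x ⊆ Φ^B_x. That is, if x ∈ A ∩ B, A_x ⊆ B_x, and ŝ_A(y) = ŝ_B(y) for all y ∈ A_x, then every defined value in Φ^A_x also lies in Φ^B_x. -/
open Finset
open scoped Classical

lemma minv_le_maxv {k : ℕ} (x : Fin k → ℕ) : minv x ≤ maxv x := by
  rcases Nat.eq_zero_or_pos k with hk | hk
  · subst hk
    have h1 : minv x = 0 := by
      simp [minv, Set.range_eq_empty, Nat.sInf_empty]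
    simp [h1]
  · have i : Fin k := ⟨0, hk⟩
    calc minv x ≤ x i := Nat.sInf_le ⟨i, rfl⟩
      _ ≤ maxv x := Finset.le_sup (Finset.mem_univ i)

lemma phi_lt {k r : ℕ}
    (Θ : Set ((Fin k → ℕ) × (Fin k → ℕ))) (hΘ : Downward Θ)
    (F : (Fin k → ℕ) → (Fin r → (Fin k → ℕ) × ℕ) → Option ℕ)
    (hF : PartialSelection F)
    (B : Set (Fin k → ℕ)) (sB : (Fin k → ℕ) → ℕ) (ΦB : (Fin k → ℕ) → Set ℕ)
    (hm : CommitteeModel Θ F B maxv sB ΦB) :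
    ∀ z, ∀ n ∈ ΦB z, n < maxv z := by
  obtain ⟨hspec, hval⟩ := hm
  suffices h : ∀ m z, maxv z ≤ m → ∀ n ∈ ΦB z, n < maxv z by
    intro z; exact h (maxv z) z le_rfl
  intro m
  induction m using Nat.strong_induction_on with
  | _ m ih =>
    intro z hz n hn
    rw [hspec z] at hn
    obtain ⟨ys, h1, h2, h3⟩ := hn
    obtain ⟨i, rfl⟩ := hF _ _ _ h3
    have hw : maxv (ys i).1 < maxv z := hΘ _ (h1 i).2
    rw [h2 i]
    split
    · have := minv_le_maxv (ys i).1
      omega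
    · rename_i hne
      have hsb := (hval _ (h1 i).1).2 hne
      rw [hsb]
      have hmem : sInf (ΦB (ys i).1) ∈ ΦB (ys i).1 :=
        Nat.sInf_mem (Set.nonempty_iff_ne_empty.mpr hne)
      have hlt : sInf (ΦB (ys i).1) < maxv (ys i).1 := by
        rcases m with _ | m
        · omega
        · exact ih m (Nat.lt_succ_self m) _ (by omega) _ hmem
      omega

/-- under the jump-free hypotheses, if `Φ^A_x ≠ ∅` then
`Φ^A_x ⊆ Φ^B_x`. -/
theorem phi_subset (k r : ℕ) (hk : 2 ≤ k) (hr : 1 ≤ r)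
    (Θ : Set ((Fin k → ℕ) × (Fin k → ℕ))) (hΘ : Downward Θ)
    (F : (Fin k → ℕ) → (Fin r → (Fin k → ℕ) × ℕ) → Option ℕ)
    (hF : PartialSelection F)
    (A B : Set (Fin k → ℕ)) (hA : A.Finite) (hB : B.Finite)
    (sA sB : (Fin k → ℕ) → ℕ) (ΦA ΦB : (Fin k → ℕ) → Set ℕ)
    (hmA : CommitteeModel Θ F A maxv sA ΦA)
    (hmB : CommitteeModel Θ F B maxv sB ΦB)
    (x : Fin k → ℕ) (hx : x ∈ A ∩ B)
    (hsub : {z ∈ A | maxv z < maxv x} ⊆ {z ∈ B | maxv z < maxv x})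
    (hagree : ∀ y ∈ {z ∈ A | maxv z < maxv x}, sA y = sB y) :
    ΦA x ≠ ∅ → ΦA x ⊆ ΦB x := by
  intro _hne
  obtain ⟨hspecA, hvalA⟩ := hmA
  obtain ⟨hspecB, hvalB⟩ := hmB
  have key : ∀ m y, maxv y ≤ m → y ∈ A → (y = x ∨ maxv y < maxv x) →
      ΦA y ⊆ ΦB y := by
    intro m
    induction m using Nat.strong_induction_on with
    | _ m ih =>
      intro y hym hyA hyx n hn
      rw [hspecA y] at hn
      obtain ⟨ys, h1, h2, h3⟩ := hn
      have hz : ∀ i, (ys i).1 ∈ A ∧ maxv (ys i).1 < maxv y ∧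
          maxv (ys i).1 < maxv x := by
        intro i
        have hlt : maxv (ys i).1 < maxv y := hΘ _ (h1 i).2
        refine ⟨(h1 i).1, hlt, ?_⟩
        rcases hyx with rfl | h
        · exact hlt
        · omega
      have hzAx : ∀ i, (ys i).1 ∈ {z ∈ A | maxv z < maxv x} := by
        intro i; exact ⟨(hz i).1, (hz i).2.2⟩
      rw [hspecB y]
      refine ⟨ys, fun i => ⟨(hsub (hzAx i)).1, (h1 i).2⟩, fun i => ?_, h3⟩
      rw [h2 i]
      by_cases hA0 : ΦA (ys i).1 = ∅
      · have hBe : ΦB (ys i).1 = ∅ := by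
          by_contra hB0
          have hsa : sA (ys i).1 = maxv (ys i).1 := (hvalA _ (hz i).1).1 hA0
          have hsb : sB (ys i).1 = sInf (ΦB (ys i).1) :=
            (hvalB _ (hsub (hzAx i)).1).2 hB0
          have hmem := Nat.sInf_mem (Set.nonempty_iff_ne_empty.mpr hB0)
          have hlt := phi_lt Θ hΘ F hF B sB ΦB ⟨hspecB, hvalB⟩ _ _ hmem
          have hag := hagree _ (hzAx i)
          omega
        rw [if_pos hA0, if_pos hBe]
      · have hsubAB : ΦA (ys i).1 ⊆ ΦB (ys i).1 := by
          rcases m with _ | m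
          · have := (hz i).2.1; omega
          · exact ih m (Nat.lt_succ_self m) _ (by have := (hz i).2.1; omega)
              (hz i).1 (Or.inr (hz i).2.2)
        have hBne : ΦB (ys i).1 ≠ ∅ := by
          intro h
          exact hA0 (Set.subset_empty_iff.mp (h ▸ hsubAB))
        rw [if_neg hA0, if_neg hBne, hagree _ (hzAx i)]
  exact key (maxv x) x le_rfl hx.1 (Or.inl rfl)
end

section
/- Let D be capped by E^k ⊆ D and let x be the maximal element; set D' = D_x ∪ setmax(E^k) where D_x = {z ∈ D : max(z) < max(D)}. Then the restriction of h^ρ_D to E^k equals the restriction of h^ρ_{D'} to E^k. -/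
open Finset
open scoped Classical

/-- The set of elements of `S` of maximal max-norm. -/
def setmaxSet {k : ℕ} (S : Set (Fin k → ℕ)) : Set (Fin k → ℕ) :=
  {z ∈ S | ∀ w ∈ S, maxv w ≤ maxv z}

/-- if `D` is capped by `E^k ⊆ D` and
`D' = D_x ∪ setmax(E^k)` (where `D_x` is the set of elements of `D` of
non-maximal norm), then `h^ρ_D` and `h^ρ_{D'}` agree on `E^k`. -/
theorem h_restrict_capped (k r : ℕ) (hk : 2 ≤ k) (hr : 1 ≤ r)
    (Θ : Set ((Fin k → ℕ) × (Fin k → ℕ))) (hΘ : Downward Θ)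
    (F : (Fin k → ℕ) → (Fin r → (Fin k → ℕ) × ℕ) → Option ℕ)
    (hF : PartialSelection F)
    (D : Set (Fin k → ℕ)) (hD : D.Finite)
    (E : Finset ℕ) (hE : 2 ≤ E.card)
    (hcube : ∀ x : Fin k → ℕ, (∀ i, x i ∈ E) → x ∈ D)
    (hcap : setmaxSet D = setmaxSet {x : Fin k → ℕ | ∀ i, x i ∈ E})
    (ρ : (Fin k → ℕ) → ℕ) (hρ : ∀ z ∈ D, minv z ≤ ρ z)
    (h h' : (Fin k → ℕ) → ℕ) (Φ Φ' : (Fin k → ℕ) → Set ℕ)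
    (hm : CommitteeModel Θ F D ρ h Φ)
    (hm' : CommitteeModel Θ F
      ((D \ setmaxSet D) ∪ setmaxSet {x : Fin k → ℕ | ∀ i, x i ∈ E})
      ρ h' Φ') :
    ∀ x : Fin k → ℕ, (∀ i, x i ∈ E) → h x = h' x := by
  obtain ⟨hspec, hval⟩ := hm
  obtain ⟨hspec', hval'⟩ := hm'
  have hsub : setmaxSet D ⊆ D := fun z hz => hz.1
  have hDD : ((D \ setmaxSet D) ∪ setmaxSet {x : Fin k → ℕ | ∀ i, x i ∈ E}) = D := by
    rw [← hcap]
    ext z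
    constructor
    · rintro (hz | hz)
      · exact hz.1
      · exact hsub hz
    · intro hz
      by_cases hmem : z ∈ setmaxSet D
      · exact Or.inr hmem
      · exact Or.inl ⟨hz, hmem⟩
  rw [hDD] at hspec' hval'
  have hh : ∀ z ∈ D, Φ z = Φ' z → h z = h' z := by
    intro z hz hΦz
    by_cases hemp : Φ z = ∅
    · rw [(hval z hz).1 hemp, (hval' z hz).1 (hΦz ▸ hemp)]
    · rw [(hval z hz).2 hemp, (hval' z hz).2 (hΦz ▸ hemp), hΦz]
  have key : ∀ n z, maxv z < n → Φ z = Φ' z := by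
    intro n
    induction n with
    | zero => intro z hz; omega
    | succ n ih =>
      intro z hz
      rw [hspec z, hspec' z]
      ext m
      simp only [Set.mem_setOf_eq]
      constructor
      · rintro ⟨ys, h1, h2, h3⟩
        refine ⟨ys, h1, fun i => ?_, h3⟩
        have hy := h1 i
        have hlt : maxv (ys i).1 < n :=
          lt_of_lt_of_le (hΘ _ hy.2) (Nat.lt_succ_iff.mp hz)
        have hΦy := ih _ hlt
        rw [h2 i, hΦy, hh _ hy.1 hΦy]
      · rintro ⟨ys, h1, h2, h3⟩
        refine ⟨ys, h1, fun i => ?_, h3⟩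
        have hy := h1 i
        have hlt : maxv (ys i).1 < n :=
          lt_of_lt_of_le (hΘ _ hy.2) (Nat.lt_succ_iff.mp hz)
        have hΦy := ih _ hlt
        rw [h2 i, ← hΦy, hh _ hy.1 hΦy]
  intro x hx
  exact hh x (hcube x hx) (key (maxv x + 1) x (Nat.lt_succ_self _))
end
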